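/- arXiv:2103.10208 — 7 statements merged into one kernel-verified Lean document; each statement's English description precedes it below -/
import Mathlib

section
/- The Bernoulli number B_n(0), defined by the generating function x/(e^x − 1) = ∑_{n≥0} B_n(0) x^n/n!, satisfies B_n(0) = ∑_{l=0}^{n} (-1)^l (n!/(l+1)) A(n,l), where A(n,l) = (1/n!) ∑_{m=0}^{l} (-1)^{l-m} C(l,m) m^n. -/
open Finset

/-- The number `A(n,l)` from the paper. -/
noncomputable def A (n l : ℕ) : ℚ :=
  if l ≤ n then
    (1 / n.factorial) * ∑ m ∈ Finset.range (l + 1),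
      (-1) ^ (l - m) * (l.choose m : ℚ) * (m : ℚ) ^ n
  else 0


noncomputable def D (n l : ℕ) : ℚ :=
  ∑ m ∈ Finset.range (l + 1), (-1) ^ m * (l.choose m : ℚ) * (m : ℚ) ^ n

lemma shiftLem (f : ℕ → ℚ) (l : ℕ) :
    ∑ m ∈ range (l + 1), (-1) ^ m * (l.choose m : ℚ) * f (m + 1) =
      (∑ m ∈ range (l + 1), (-1) ^ m * (l.choose m : ℚ) * f m) -
        ∑ m ∈ range (l + 2), (-1) ^ m * ((l + 1).choose m : ℚ) * f m := by
  have hA : ∑ m ∈ range (l + 1), (-1 : ℚ) ^ m * (l.choose m : ℚ) * f m =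
      (∑ m ∈ range l, (-1 : ℚ) ^ (m + 1) * (l.choose (m + 1) : ℚ) * f (m + 1)) + f 0 := by
    rw [Finset.sum_range_succ' (fun m => (-1 : ℚ) ^ m * (l.choose m : ℚ) * f m) l]
    simp
  have hBig : ∑ m ∈ range (l + 2), (-1 : ℚ) ^ m * ((l + 1).choose m : ℚ) * f m =
      -(∑ m ∈ range (l + 1), (-1 : ℚ) ^ m * (l.choose m : ℚ) * f (m + 1)) +
        (∑ m ∈ range l, (-1 : ℚ) ^ (m + 1) * (l.choose (m + 1) : ℚ) * f (m + 1)) + f 0 := by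
    rw [Finset.sum_range_succ' (fun m => (-1 : ℚ) ^ m * ((l + 1).choose m : ℚ) * f m) (l + 1)]
    have h1 : ∀ m ∈ range (l + 1),
        (-1 : ℚ) ^ (m + 1) * (((l + 1).choose (m + 1) : ℕ) : ℚ) * f (m + 1) =
          -((-1) ^ m * (l.choose m : ℚ) * f (m + 1)) +
            (-1 : ℚ) ^ (m + 1) * (l.choose (m + 1) : ℚ) * f (m + 1) := by
      intro m _
      rw [Nat.choose_succ_succ]
      push_cast
      ring
    rw [Finset.sum_congr rfl h1, Finset.sum_add_distrib]
    have h2 : ∑ m ∈ range (l + 1), (-1 : ℚ) ^ (m + 1) * (l.choose (m + 1) : ℚ) * f (m + 1) =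
        ∑ m ∈ range l, (-1 : ℚ) ^ (m + 1) * (l.choose (m + 1) : ℚ) * f (m + 1) := by
      rw [Finset.sum_range_succ, Nat.choose_succ_self]
      simp
    rw [h2, Finset.sum_neg_distrib]
    simp
  rw [hA, hBig]
  ring

lemma D_rec (n l : ℕ) : D (n + 1) (l + 1) = (l + 1 : ℚ) * (D n (l + 1) - D n l) := by
  have key : D (n + 1) (l + 1) =
      -((l + 1 : ℚ)) * ∑ m ∈ range (l + 1), (-1) ^ m * (l.choose m : ℚ) * (((m + 1 : ℕ)) : ℚ) ^ n := by
    unfold D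
    rw [Finset.sum_range_succ' (fun m => (-1 : ℚ) ^ m * ((l + 1).choose m : ℚ) * (m : ℚ) ^ (n + 1)) (l + 1)]
    rw [Finset.mul_sum]
    simp only [Nat.cast_zero, zero_pow (Nat.succ_ne_zero n), mul_zero, add_zero,
      Nat.choose_zero_right, Nat.cast_one, one_mul, pow_zero]
    refine Finset.sum_congr rfl fun m _ => ?_
    have h : ((l : ℚ) + 1) * (l.choose m : ℚ) = (((l + 1).choose (m + 1) : ℕ) : ℚ) * ((m : ℚ) + 1) := by
      exact_mod_cast congrArg (Nat.cast : ℕ → ℚ) (Nat.add_one_mul_choose_eq l m)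
    push_cast
    linear_combination ((-1 : ℚ) ^ m * ((m : ℚ) + 1) ^ n) * h
  have hs := shiftLem (fun m => (m : ℚ) ^ n) l
  rw [key]
  unfold D
  rw [hs]
  ring

lemma D_eq_zero : ∀ n l : ℕ, n < l → D n l = 0 := by
  intro n
  induction n with
  | zero =>
    intro l hl
    obtain ⟨k, rfl⟩ : ∃ k, l = k + 1 := ⟨l - 1, by omega⟩
    unfold D
    have := @Int.alternating_sum_range_choose (k + 1)
    rw [if_neg (Nat.succ_ne_zero k)] at this
    have h2 : ((∑ m ∈ range (k + 1 + 1), (-1 : ℤ) ^ m * ((k + 1).choose m : ℤ) : ℤ) : ℚ) = 0 := by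
      rw [this]; norm_num
    push_cast at h2
    simpa using h2
  | succ n ih =>
    intro l hl
    obtain ⟨k, rfl⟩ : ∃ k, l = k + 1 := ⟨l - 1, by omega⟩
    rw [D_rec, ih (k + 1) (by omega), ih k (by omega)]
    ring

lemma D_zero_right (n : ℕ) : D n 0 = if n = 0 then 1 else 0 := by
  unfold D
  cases n <;> simp

noncomputable def R (n : ℕ) : ℚ := ∑ l ∈ range (n + 1), D n l / ((l : ℚ) + 1)

lemma sum_R (n : ℕ) : ∑ k ∈ range n, (n.choose k : ℚ) * R k = if n = 1 then 1 else 0 := by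
  have step1 : ∑ k ∈ range n, (n.choose k : ℚ) * R k =
      ∑ k ∈ range n, (n.choose k : ℚ) * ∑ l ∈ range n, D k l / ((l : ℚ) + 1) := by
    refine Finset.sum_congr rfl fun k hk => ?_
    rw [mem_range] at hk
    congr 1
    unfold R
    refine Finset.sum_subset ?_ ?_
    · intro x hx; rw [mem_range] at *; omega
    · intro x _ hx
      rw [mem_range, not_lt] at hx
      rw [D_eq_zero k x (by omega)]
      simp
  rw [step1]
  simp_rw [Finset.mul_sum]
  rw [Finset.sum_comm]
  have inner : ∀ l ∈ range n, ∑ k ∈ range n, (n.choose k : ℚ) * (D k l / ((l : ℚ) + 1)) =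
      -(D n (l + 1)) / ((l : ℚ) + 1) := by
    intro l _
    have swap : ∑ k ∈ range n, (n.choose k : ℚ) * D k l =
        ∑ m ∈ range (l + 1), (-1 : ℚ) ^ m * (l.choose m : ℚ) *
          (∑ k ∈ range n, (n.choose k : ℚ) * (m : ℚ) ^ k) := by
      unfold D
      simp_rw [Finset.mul_sum]
      rw [Finset.sum_comm]
      refine Finset.sum_congr rfl fun m _ => ?_
      refine Finset.sum_congr rfl fun k _ => ?_
      ring
    have binom : ∀ m : ℕ, ∑ k ∈ range n, (n.choose k : ℚ) * (m : ℚ) ^ k =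
        (((m + 1 : ℕ)) : ℚ) ^ n - (m : ℚ) ^ n := by
      intro m
      have := add_pow (m : ℚ) 1 n
      rw [Finset.sum_range_succ] at this
      simp only [one_pow, mul_one, Nat.choose_self, Nat.cast_one, Nat.sub_self, pow_zero] at this
      push_cast
      have h2 : ∑ k ∈ range n, (n.choose k : ℚ) * (m : ℚ) ^ k =
          ∑ k ∈ range n, (m : ℚ) ^ k * (n.choose k : ℚ) := by
        refine Finset.sum_congr rfl fun k _ => ?_; ring
      rw [h2]
      linarith [this]
    have hs := shiftLem (fun m => (m : ℚ) ^ n) l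
    have key : ∑ k ∈ range n, (n.choose k : ℚ) * D k l = -(D n (l + 1)) := by
      rw [swap]
      have : ∑ m ∈ range (l + 1), (-1 : ℚ) ^ m * (l.choose m : ℚ) *
          (∑ k ∈ range n, (n.choose k : ℚ) * (m : ℚ) ^ k) =
          (∑ m ∈ range (l + 1), (-1 : ℚ) ^ m * (l.choose m : ℚ) * (((m + 1 : ℕ)) : ℚ) ^ n) -
            ∑ m ∈ range (l + 1), (-1 : ℚ) ^ m * (l.choose m : ℚ) * (m : ℚ) ^ n := by
        rw [← Finset.sum_sub_distrib]
        refine Finset.sum_congr rfl fun m _ => ?_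
        rw [binom m]
        ring
      rw [this, hs]
      unfold D
      ring
    calc ∑ k ∈ range n, (n.choose k : ℚ) * (D k l / ((l : ℚ) + 1))
        = (∑ k ∈ range n, (n.choose k : ℚ) * D k l) / ((l : ℚ) + 1) := by
          rw [Finset.sum_div]
          refine Finset.sum_congr rfl fun k _ => by ring
      _ = -(D n (l + 1)) / ((l : ℚ) + 1) := by rw [key]
  rw [Finset.sum_congr rfl inner]
  -- now: ∑ l ∈ range n, -(D n (l+1))/(l+1) = if n = 1 then 1 else 0
  cases n with
  | zero => simp
  | succ N =>
    have tele : ∀ l ∈ range (N + 1), -(D (N + 1) (l + 1)) / ((l : ℚ) + 1) =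
        -(D N (l + 1) - D N l) := by
      intro l _
      rw [D_rec]
      have h0 : ((l : ℚ) + 1) ≠ 0 := by positivity
      field_simp
    rw [Finset.sum_congr rfl tele, Finset.sum_neg_distrib, Finset.sum_range_sub (fun l => D N l)]
    rw [D_eq_zero N (N + 1) (by omega), D_zero_right]
    rcases Nat.eq_zero_or_pos N with h | h
    · subst h; norm_num
    · rw [if_neg (by omega), if_neg (by omega)]
      ring

lemma bernoulli_eq_R (n : ℕ) : bernoulli n = R n := by
  induction n using Nat.strong_induction_on with
  | _ n ih =>
    have h1 := sum_bernoulli (n + 1)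
    have h2 := sum_R (n + 1)
    rw [Finset.sum_range_succ] at h1 h2
    have h3 : ∑ k ∈ range n, ((n + 1).choose k : ℚ) * bernoulli k =
        ∑ k ∈ range n, ((n + 1).choose k : ℚ) * R k := by
      refine Finset.sum_congr rfl fun k hk => ?_
      rw [ih k (mem_range.mp hk)]
    have h4 : (((n + 1).choose n : ℕ) : ℚ) * bernoulli n = (((n + 1).choose n : ℕ) : ℚ) * R n := by
      have := h1.trans h2.symm
      rw [h3] at this
      linarith [this]
    have hc : (((n + 1).choose n : ℕ) : ℚ) ≠ 0 := by
      rw [Nat.choose_succ_self_right]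
      positivity
    exact mul_left_cancel₀ hc h4

/-- The Bernoulli number `B_n(0)` (Mathlib's `bernoulli`, with generating function
`x/(e^x - 1) = ∑ B_n(0) x^n / n!`) satisfies
`B_n(0) = ∑_{l=0}^n (-1)^l (n!/(l+1)) A(n,l)`. -/
theorem stmt_4 (n : ℕ) :
    bernoulli n =
      ∑ l ∈ Finset.range (n + 1),
        (-1) ^ l * ((n.factorial : ℚ) / ((l : ℚ) + 1)) * A n l := by
  rw [bernoulli_eq_R]
  unfold R
  refine Finset.sum_congr rfl fun l hl => ?_
  rw [mem_range] at hl
  have hl' : l ≤ n := by omega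
  rw [A, if_pos hl']
  have hfac : ((n.factorial : ℕ) : ℚ) ≠ 0 := by
    exact_mod_cast n.factorial_ne_zero
  have hl1 : ((l : ℚ) + 1) ≠ 0 := by positivity
  set S := ∑ m ∈ Finset.range (l + 1), (-1 : ℚ) ^ (l - m) * (l.choose m : ℚ) * (m : ℚ) ^ n with hS
  have h1 : (-1 : ℚ) ^ l * ((n.factorial : ℚ) / ((l : ℚ) + 1)) * (1 / (n.factorial : ℚ) * S) =
      ((-1 : ℚ) ^ l * S) / ((l : ℚ) + 1) := by
    field_simp
  have key : (-1 : ℚ) ^ l * S = ∑ m ∈ range (l + 1), (-1 : ℚ) ^ m * (l.choose m : ℚ) * (m : ℚ) ^ n := by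
    rw [hS, Finset.mul_sum]
    refine Finset.sum_congr rfl fun m hm => ?_
    rw [mem_range] at hm
    have hml : l - m + m = l := Nat.sub_add_cancel (by omega)
    have hpow : (-1 : ℚ) ^ l = (-1) ^ (l - m) * (-1) ^ m := by
      rw [← pow_add, hml]
    have hsq : (-1 : ℚ) ^ (l - m) * (-1 : ℚ) ^ (l - m) = 1 := by
      rw [← pow_add]
      exact Even.neg_one_pow ⟨l - m, by ring⟩
    rw [hpow]
    calc (-1 : ℚ) ^ (l - m) * (-1) ^ m * ((-1) ^ (l - m) * (l.choose m : ℚ) * (m : ℚ) ^ n)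
        = ((-1 : ℚ) ^ (l - m) * (-1 : ℚ) ^ (l - m)) * ((-1) ^ m * (l.choose m : ℚ) * (m : ℚ) ^ n) := by
          ring
      _ = (-1 : ℚ) ^ m * (l.choose m : ℚ) * (m : ℚ) ^ n := by rw [hsq]; ring
  rw [h1, key]
  unfold D
  rfl
end

section
/- Let T(x) = x/(1 − e^{−x}) be the Todd power series and T^{(m)} its m-th derivative. Then for every n ≥ 1, the formal power series identity ∑_{m=0}^{n} ((−v)^m / m!) T^{(m)}(v) = (T(v) − v T'(v)) · ∑_{l=1}^{n} A(n,l) (−v)^{n−l} T(v)^{l−1} holds, where A(n,l) = (1/n!) ∑_{m=0}^{l} (-1)^{l-m} C(l,m) m^n. -/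
open Finset PowerSeries

/-- The formal derivative on `ℚ⟦X⟧`. -/
noncomputable def der (f : PowerSeries ℚ) : PowerSeries ℚ := PowerSeries.derivative ℚ f

/-! With `u = -X` and `t = T`, the derivation `θ = X • d/dX` acts by `θ u = u` and
`θ t = t (1 - t - u)`; the second identity is the derivative of `T (1 - e^{-X}) = X`. The factor
`T - X T'` is `t (t + u)`, and `t + u` is again an eigenvector of `θ` up to a linear factor,
`θ (t + u) = (1 - t) (t + u)`, so `θ` maps `t (t + u) u^a t^b` to itself times an affine function
of `u, t`.

Write `S_n` for the left side and `Q_n = ∑ A(n,l) u^{n-l} t^{l-1}`. Since the derivative of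
`S_n` telescopes to a single term, `θ S_n = (n+1) (S_n - S_{n+1})`. The eigenvector computation
gives `θ (t (t + u) Q_n) = (n+1) (t (t + u) Q_n - t (t + u) Q_{n+1})`, after regrouping with the
recurrence `(n+1) A(n+1,l) = l (A(n,l) + A(n,l-1))`; that recurrence comes from differentiating
`(e^x - 1)^l`, whose `n`-th coefficient is `A(n,l)`. Both sides agree at `n = 1` and satisfy the
same recursion in `n`. -/

theorem sum_Icc_one_eq_sum_range {M : Type*} [AddCommMonoid M] (f : ℕ → M) (n : ℕ) :
    ∑ l ∈ Icc 1 n, f l = ∑ l ∈ range n, f (l + 1) := by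
  rw [← Ico_add_one_right_eq_Icc, sum_Ico_eq_sum_range, Nat.add_sub_cancel]
  simp only [add_comm 1]

theorem derivative_rescale {S : Type*} [CommSemiring S] (a : S) (f : S⟦X⟧) :
    d⁄dX S (rescale a f) = C a * rescale a (d⁄dX S f) := by
  ext n
  simp only [coeff_derivative, coeff_rescale, coeff_C_mul, pow_succ]
  ring

theorem Derivation.apply_pow_of_apply_eq_mul {S B : Type*} [CommSemiring S] [CommSemiring B]
    [Algebra S B] (D : Derivation S B B) {x c : B} (h : D x = c * x) (k : ℕ) :
    D (x ^ k) = k * c * x ^ k := by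
  induction k with
  | zero => simp
  | succ k ih =>
    rw [pow_succ, Derivation.leibniz, ih, h, smul_eq_mul, smul_eq_mul]
    push_cast
    ring

theorem A_of_lt {n l : ℕ} (h : n < l) : A n l = 0 := if_neg (by omega)

theorem A_zero_right {n : ℕ} (hn : n ≠ 0) : A n 0 = 0 := by
  simp [A, hn]

theorem coeff_exp_sub_one_pow_of_lt {n l : ℕ} (h : n < l) :
    coeff n ((exp ℚ - 1) ^ l) = 0 := by
  have hX : (X : ℚ⟦X⟧) ∣ exp ℚ - 1 := X_dvd_iff.mpr (by simp)
  exact X_pow_dvd_iff.mp (pow_dvd_pow_of_dvd hX l) n h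

theorem A_eq_coeff_exp_sub_one_pow (n l : ℕ) : A n l = coeff n ((exp ℚ - 1) ^ l) := by
  rcases lt_or_ge n l with h | h
  · rw [A_of_lt h, coeff_exp_sub_one_pow_of_lt h]
  rw [A, if_pos h, sub_eq_add_neg, add_pow, map_sum, mul_sum]
  refine sum_congr rfl fun m _ => ?_
  have hC : (-1 : ℚ⟦X⟧) ^ (l - m) * (l.choose m : ℚ⟦X⟧) =
      C ((-1 : ℚ) ^ (l - m) * l.choose m) := by
    simp
  rw [exp_pow_eq_rescale_exp, mul_assoc (rescale _ _), hC, coeff_mul_C, coeff_rescale, coeff_exp]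
  simp only [Algebra.algebraMap_self, RingHom.id_apply]
  ring

theorem succ_mul_A_succ_succ (n l : ℕ) :
    ((n : ℚ) + 1) * A (n + 1) (l + 1) = ((l : ℚ) + 1) * (A n (l + 1) + A n l) := by
  have hder : d⁄dX ℚ ((exp ℚ - 1) ^ (l + 1)) =
      C ((l : ℚ) + 1) * ((exp ℚ - 1) ^ (l + 1) + (exp ℚ - 1) ^ l) := by
    rw [Derivation.leibniz_pow, map_sub, derivative_exp, Derivation.map_one_eq_zero, sub_zero,
      Nat.add_sub_cancel, nsmul_eq_mul, smul_eq_mul]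
    simp only [map_add, map_natCast, map_one]
    push_cast
    ring
  have hcoeff := congrArg (coeff n) hder
  rw [coeff_derivative, coeff_C_mul, map_add] at hcoeff
  simp only [A_eq_coeff_exp_sub_one_pow]
  linear_combination hcoeff

section toddPoly

variable {R : Type*} [CommRing R] [Algebra ℚ R]

noncomputable def toddPoly (n : ℕ) (u t : R) : R :=
  ∑ l ∈ Icc 1 n, algebraMap ℚ R (A n l) * u ^ (n - l) * t ^ (l - 1)

theorem succ_smul_toddPoly_succ {n : ℕ} (hn : 1 ≤ n) (u t : R) :
    ((n : ℚ) + 1) • toddPoly (n + 1) u t = ∑ l ∈ Icc 1 n,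
      algebraMap ℚ R (A n l) * u ^ (n - l) * t ^ (l - 1) * (l * u + (l + 1) * t) := by
  set M : ℕ → R := fun l => u ^ (n - l) * t ^ l
  have hA : ∀ l, ((n : ℚ) + 1) * A (n + 1) (l + 1) = (l + 1) * A n (l + 1) + (l + 1) * A n l :=
    fun l => by rw [succ_mul_A_succ_succ]; ring
  calc ((n : ℚ) + 1) • toddPoly (n + 1) u t
      = ∑ l ∈ range (n + 1), algebraMap ℚ R ((l + 1) * A n (l + 1)) * M l
        + ∑ l ∈ range (n + 1), algebraMap ℚ R ((l + 1) * A n l) * M l := by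
        rw [toddPoly, sum_Icc_one_eq_sum_range, smul_sum, ← sum_add_distrib]
        refine sum_congr rfl fun l hl => ?_
        rw [Algebra.smul_def, ← mul_assoc, ← mul_assoc, ← map_mul, hA, map_add]
        simp only [M, Nat.add_sub_add_right, Nat.add_sub_cancel]
        ring
    _ = ∑ l ∈ range n, algebraMap ℚ R ((l + 1) * A n (l + 1)) * M l
        + ∑ l ∈ range n, algebraMap ℚ R ((l + 1 + 1) * A n (l + 1)) * M (l + 1) := by
        rw [sum_range_succ, sum_range_succ', A_of_lt n.lt_succ_self, A_zero_right (by omega)]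
        push_cast
        simp only [mul_zero, zero_mul, add_zero]
    _ = _ := by
        rw [sum_Icc_one_eq_sum_range, ← sum_add_distrib]
        refine sum_congr rfl fun l hl => ?_
        have : n - l = n - (l + 1) + 1 := by have := mem_range.mp hl; omega
        simp only [M, map_mul, map_add, map_natCast, map_one, Nat.add_sub_cancel, this, pow_succ]
        push_cast
        ring

variable (D : Derivation ℚ R R) {u t : R}

theorem apply_mul_monomial (hu : D u = u) (ht : D t = t * (1 - t - u)) (a b : ℕ) :
    D (t * (t + u) * (u ^ a * t ^ b)) =
      t * (t + u) * (u ^ a * t ^ b) * ((a + b + 2 : R) - (b + 1) * u - (b + 2) * t) := by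
  have hua := D.apply_pow_of_apply_eq_mul (c := 1) (by rw [hu, one_mul]) a
  have htb := D.apply_pow_of_apply_eq_mul (x := t) (c := 1 - t - u) (by rw [ht, mul_comm]) b
  simp only [Derivation.leibniz, map_add, smul_eq_mul, hu, ht, hua, htb]
  ring

theorem apply_mul_toddPoly (hu : D u = u) (ht : D t = t * (1 - t - u)) (n : ℕ) :
    D (t * (t + u) * toddPoly n u t) = t * (t + u) * ∑ l ∈ Icc 1 n, algebraMap ℚ R (A n l) *
      u ^ (n - l) * t ^ (l - 1) * ((n + 1 : R) - l * u - (l + 1) * t) := by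
  rw [toddPoly, mul_sum, map_sum, mul_sum]
  refine sum_congr rfl fun l hl => ?_
  obtain ⟨hl1, hln⟩ := mem_Icc.mp hl
  rw [mul_assoc (algebraMap ℚ R _), ← Algebra.smul_def, mul_smul_comm, D.map_smul,
    apply_mul_monomial D hu ht]
  push_cast [Nat.cast_sub hl1, Nat.cast_sub hln, Algebra.smul_def]
  ring

theorem apply_mul_toddPoly_eq_smul (hu : D u = u) (ht : D t = t * (1 - t - u)) {n : ℕ}
    (hn : 1 ≤ n) :
    D (t * (t + u) * toddPoly n u t) =
      ((n : ℚ) + 1) • (t * (t + u) * toddPoly n u t - t * (t + u) * toddPoly (n + 1) u t) := by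
  rw [apply_mul_toddPoly D hu ht, smul_sub, ← mul_smul_comm, ← mul_smul_comm,
    succ_smul_toddPoly_succ hn, toddPoly, smul_sum, ← mul_sub, ← sum_sub_distrib]
  congr 1
  refine sum_congr rfl fun l _ => ?_
  rw [Algebra.smul_def]
  push_cast
  ring

end toddPoly

noncomputable def taylorNegX (n : ℕ) (f : ℚ⟦X⟧) : ℚ⟦X⟧ :=
  ∑ m ∈ range (n + 1), C (1 / m.factorial : ℚ) * (-X) ^ m * der^[m] f

theorem taylorNegX_succ (n : ℕ) (f : ℚ⟦X⟧) :
    taylorNegX (n + 1) f =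
      taylorNegX n f + C (1 / (n + 1).factorial : ℚ) * (-X) ^ (n + 1) * der^[n + 1] f :=
  sum_range_succ _ _

theorem der_eq_derivative : der = ⇑(d⁄dX ℚ) := rfl

theorem der_taylorNegX (n : ℕ) (f : ℚ⟦X⟧) :
    der (taylorNegX n f) = C (1 / n.factorial : ℚ) * (-X) ^ n * der^[n + 1] f := by
  induction n with
  | zero => simp [taylorNegX, der]
  | succ n ih =>
    have hfac : C (1 / (n + 1).factorial : ℚ) * (n + 1 : ℕ) = C (1 / n.factorial : ℚ) := by
      rw [← map_natCast C, ← map_mul, Nat.factorial_succ]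
      congr 1
      push_cast
      field_simp
    rw [taylorNegX_succ, Function.iterate_succ_apply' der (n + 1)]
    rw [der_eq_derivative] at ih ⊢
    rw [map_add, ih, Derivation.leibniz, Derivation.leibniz, Derivation.leibniz_pow]
    simp only [smul_eq_mul, nsmul_eq_mul, Nat.add_sub_cancel, map_neg, derivative_X,
      derivative_C, mul_zero, add_zero]
    linear_combination (-((-X) ^ n * (d⁄dX ℚ)^[n + 1] f)) * hfac

theorem X_mul_der_taylorNegX (n : ℕ) (f : ℚ⟦X⟧) :
    X * der (taylorNegX n f) = ((n : ℚ) + 1) • (taylorNegX n f - taylorNegX (n + 1) f) := by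
  have hfac : C (1 / n.factorial : ℚ) = C ((n : ℚ) + 1) * C (1 / (n + 1).factorial : ℚ) := by
    rw [← map_mul, Nat.factorial_succ]
    congr 1
    push_cast
    field_simp
  rw [der_taylorNegX, taylorNegX_succ, sub_add_cancel_left, smul_neg, smul_eq_C_mul, hfac]
  ring

theorem X_mul_der_eq_of_mul_one_sub_exp_neg {T : ℚ⟦X⟧}
    (hT : T * (1 - rescale (-1 : ℚ) (exp ℚ)) = X) :
    X * der T = T * (1 - T - -X) := by
  have hder := congrArg (d⁄dX ℚ) hT
  rw [Derivation.leibniz, map_sub, Derivation.map_one_eq_zero, derivative_rescale, derivative_exp,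
    derivative_X, smul_eq_mul, smul_eq_mul, map_neg, map_one] at hder
  rw [der_eq_derivative]
  linear_combination T * hder + (T - (d⁄dX ℚ) T) * hT

/-- Lemma 3.2 of the paper: with `T(x) = x/(1 - e^{-x})` the Todd series
(characterized by `T · (1 - e^{-X}) = X`), for every `n ≥ 1`,
`∑_{m=0}^{n} ((-v)^m/m!) T^{(m)}(v)
  = (T(v) - v T'(v)) · ∑_{l=1}^{n} A(n,l) (-v)^{n-l} T(v)^{l-1}`. -/
theorem stmt_6 (T : PowerSeries ℚ)
    (hT : T * (1 - PowerSeries.rescale (-1 : ℚ) (PowerSeries.exp ℚ)) = PowerSeries.X)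
    (n : ℕ) (hn : 1 ≤ n) :
    ∑ m ∈ Finset.range (n + 1),
        PowerSeries.C (R := ℚ) (1 / m.factorial) * (-PowerSeries.X) ^ m * der^[m] T =
      (T - PowerSeries.X * der T) *
        ∑ l ∈ Finset.Icc 1 n,
          PowerSeries.C (R := ℚ) (A n l) * (-PowerSeries.X) ^ (n - l) * T ^ (l - 1) := by
  have ht := X_mul_der_eq_of_mul_one_sub_exp_neg hT
  have hu : X * der (-X : ℚ⟦X⟧) = -X := by simp [der]
  change taylorNegX n T = (T - X * der T) * toddPoly n (-X) T
  rw [show T - X * der T = T * (T + -X) by linear_combination -ht]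
  induction n, hn using Nat.le_induction with
  | base =>
    simp [taylorNegX, toddPoly, A, sum_range_succ]
    linear_combination -ht
  | succ n hn ih =>
    have hS := X_mul_der_taylorNegX n T
    have hQ := apply_mul_toddPoly_eq_smul ((X : ℚ⟦X⟧) • d⁄dX ℚ) hu ht hn
    rw [ih] at hS
    exact sub_right_injective (smul_right_injective _ (by positivity) (hS.symm.trans hQ))
end

section
/- Let T(x) = x/(1 − e^{−x}). Then the formal power series identity v²·T''(v) = (T(v) − v·T'(v))·(2T(v) − v − 2) holds. -/
/-!
Write `E = 1 - e^{-X}`, so that `T * E = X` and `E' = 1 - E`. Differentiating `T * E = X` once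
and twice gives two relations that are linear in `T'` and `T''`; eliminating these shows that
`E²` times the difference of the two sides vanishes, in any commutative differential ring.
Since `ℚ⟦X⟧` is a domain and `E ≠ 0`, the identity follows.
-/

open PowerSeries

theorem PowerSeries.derivative_rescale_exp {A : Type*} [CommRing A] [Algebra ℚ A] (a : A) :
    d⁄dX A (rescale a (exp A)) = C a * rescale a (exp A) := by
  ext n
  have hfact : (1 / ((n + 1) * n.factorial : ℕ) : ℚ) * (n + 1) = 1 / n.factorial := by
    push_cast
    field_simp
  simp only [coeff_derivative, coeff_rescale, coeff_exp, coeff_C_mul, Nat.factorial_succ,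
    ← hfact, map_mul, map_add, map_natCast, map_one]
  ring

theorem Derivation.todd_identity_mul_sq {R A : Type*} [CommRing R] [CommRing A] [Algebra R A]
    (D : Derivation R A A) {T E x : A} (hx : D x = 1) (hE : D E = 1 - E) (hT : T * E = x) :
    E ^ 2 * (x ^ 2 * D (D T)) = E ^ 2 * ((T - x * D T) * (2 * T - x - 2)) := by
  have hT' : D T * E + T * (1 - E) = 1 := by
    have := congrArg D hT
    rw [Derivation.leibniz, hE, hx, smul_eq_mul, smul_eq_mul] at this
    linear_combination this
  have hT'' : D (D T) * E + 2 * D T * (1 - E) + T * (E - 1) = 0 := by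
    have := congrArg D hT'
    simp only [map_add, Derivation.leibniz, map_sub, Derivation.map_one_eq_zero, hE,
      smul_eq_mul] at this
    linear_combination this
  linear_combination (x ^ 2 * E) * hT'' + (x * E * (2 * T - x - 2) - 2 * x ^ 2 * (1 - E)) * hT'
    + (-x ^ 2 * (1 - E) - (E + x - x * E) * (2 * T - x - 2)) * hT

/-- With `T(x) = x/(1 - e^{-x})` the Todd series (characterized by
`T · (1 - e^{-X}) = X`), one has `v²·T''(v) = (T(v) - v·T'(v))·(2T(v) - v - 2)`. -/
theorem stmt_7 (T : PowerSeries ℚ)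
    (hT : T * (1 - PowerSeries.rescale (-1 : ℚ) (PowerSeries.exp ℚ)) = PowerSeries.X) :
    PowerSeries.X ^ 2 * der (der T) =
      (T - PowerSeries.X * der T) * (2 * T - PowerSeries.X - 2) := by
  set E : ℚ⟦X⟧ := 1 - rescale (-1 : ℚ) (exp ℚ)
  have hdE : d⁄dX ℚ E = 1 - E := by
    simp only [E, map_sub, derivative_one, derivative_rescale_exp, map_neg, map_one]
    ring
  have hE : E ≠ 0 := fun h => by simpa [E] using congrArg (coeff 1) h
  exact mul_left_cancel₀ (pow_ne_zero 2 hE)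
    ((d⁄dX ℚ).todd_identity_mul_sq (derivative_X) hdE hT)
end

section
/- Let T(x) = x/(1 − e^{−x}). Then the formal power series identity v·T'(v) = T(v)·(v − T(v) + 1) holds. -/
open PowerSeries

lemma der_exp_neg : der (PowerSeries.rescale (-1 : ℚ) (PowerSeries.exp ℚ)) =
    -(PowerSeries.rescale (-1 : ℚ) (PowerSeries.exp ℚ)) := by
  unfold der
  ext n
  rw [PowerSeries.coeff_derivative]
  simp only [PowerSeries.coeff_rescale, PowerSeries.coeff_exp, map_neg]
  have h1 : ((Nat.factorial (n+1)) : ℚ) ≠ 0 := by exact_mod_cast Nat.factorial_ne_zero _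
  have h2 : ((Nat.factorial n) : ℚ) ≠ 0 := by exact_mod_cast Nat.factorial_ne_zero _
  rw [Nat.factorial_succ] at h1 ⊢
  push_cast at h1 ⊢
  field_simp
  ring

/-- With `T(x) = x/(1 - e^{-x})` the Todd series (characterized by
`T · (1 - e^{-X}) = X`), one has `v·T'(v) = T(v)·(v - T(v) + 1)`. -/
theorem stmt_8 (T : PowerSeries ℚ)
    (hT : T * (1 - PowerSeries.rescale (-1 : ℚ) (PowerSeries.exp ℚ)) = PowerSeries.X) :
    PowerSeries.X * der T = T * (PowerSeries.X - T + 1) := by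
  set E := PowerSeries.rescale (-1 : ℚ) (PowerSeries.exp ℚ) with hE
  have hdE : PowerSeries.derivative ℚ E = -E := der_exp_neg
  have h1 : der T * (1 - E) + T * E = 1 := by
    have h := congrArg (PowerSeries.derivative ℚ) hT
    rw [Derivation.leibniz, PowerSeries.derivative_X, map_sub, hdE,
      Derivation.map_one_eq_zero, smul_eq_mul, smul_eq_mul] at h
    unfold der
    linear_combination h
  linear_combination T * h1 + (T - der T) * hT
end

section
/- For nonnegative integers n and m ≥ 0, the binomial coefficient C(4m+n, 4m) is congruent modulo 2 to C(m + ⌊n/4⌋, m). -/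
/-- `C(4m+n, 4m) ≡ C(m + ⌊n/4⌋, m) mod 2`. -/
theorem stmt_12 (m n : ℕ) :
    (4 * m + n).choose (4 * m) % 2 = (m + n / 4).choose m % 2 := by
  haveI : Fact (Nat.Prime 2) := ⟨Nat.prime_two⟩
  have h1 := Choose.choose_modEq_choose_mod_mul_choose_div_nat
    (n := 4 * m + n) (k := 4 * m) (p := 2)
  have h2 := Choose.choose_modEq_choose_mod_mul_choose_div_nat
    (n := (4 * m + n) / 2) (k := (4 * m) / 2) (p := 2)
  have e1 : (4 * m + n) / 2 = 2 * m + n / 2 := by omega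
  have e2 : (4 * m) / 2 = 2 * m := by omega
  have e3 : (2 * m + n / 2) / 2 = m + n / 4 := by omega
  have e4 : (2 * m) / 2 = m := by omega
  have e5 : (4 * m) % 2 = 0 := by omega
  have e6 : (2 * m) % 2 = 0 := by omega
  rw [e1, e2, e3, e4, e6] at h2
  rw [e5, e1, e2] at h1
  have := h1.trans (h2.mul_left _)
  simpa [Nat.choose_zero_right, Nat.ModEq] using this
end

section
/- For nonnegative integers m and n: if n is odd then C(4m+1+n, 4m+1) ≡ 0 mod 2; if n is even then C(4m+1+n, 4m+1) ≡ C(m + ⌊n/4⌋, m) mod 2. -/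
lemma lucas_step (n k : ℕ) :
    n.choose k % 2 = (n % 2).choose (k % 2) * ((n / 2).choose (k / 2)) % 2 := by
  have : Fact (Nat.Prime 2) := ⟨Nat.prime_two⟩
  exact Choose.choose_modEq_choose_mod_mul_choose_div_nat (p := 2)

/-- If `n` is odd then `C(4m+1+n, 4m+1) ≡ 0 mod 2`; if `n` is even then
`C(4m+1+n, 4m+1) ≡ C(m + ⌊n/4⌋, m) mod 2`. -/
theorem stmt_13 (m n : ℕ) :
    (Odd n → (4 * m + 1 + n).choose (4 * m + 1) % 2 = 0) ∧
    (Even n → (4 * m + 1 + n).choose (4 * m + 1) % 2 = (m + n / 4).choose m % 2) := by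
  constructor
  · rintro ⟨k, hk⟩
    rw [lucas_step, show (4 * m + 1 + n) % 2 = 0 by omega, show (4 * m + 1) % 2 = 1 by omega]
    simp
  · rintro ⟨k, hk⟩
    rw [lucas_step, show (4 * m + 1 + n) % 2 = 1 by omega, show (4 * m + 1) % 2 = 1 by omega,
      show (4 * m + 1 + n) / 2 = 2 * m + k by omega, show (4 * m + 1) / 2 = 2 * m by omega,
      Nat.choose_self, one_mul, lucas_step (2 * m + k) (2 * m), show (2 * m) % 2 = 0 by omega,
      show (2 * m + k) / 2 = m + k / 2 by omega, show (2 * m) / 2 = m by omega,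
      show n / 4 = k / 2 by omega]
    simp
end

section
/- For nonnegative integers m and n: if n·m is odd or ⌊n/2⌋·⌊m/2⌋ is odd, then C(m+n, n) ≡ 0 mod 2; otherwise C(m+n, n) ≡ C(⌊n/4⌋+⌊m/4⌋, ⌊n/4⌋) mod 2. -/
private lemma key2 (N k : ℕ) :
    N.choose k % 2 =
      ((N % 2).choose (k % 2) * ((N / 2 % 2).choose (k / 2 % 2) * (N / 4).choose (k / 4))) % 2 := by
  haveI : Fact (Nat.Prime 2) := ⟨Nat.prime_two⟩
  have h1 : N.choose k % 2 = ((N % 2).choose (k % 2) * (N / 2).choose (k / 2)) % 2 :=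
    Choose.choose_modEq_choose_mod_mul_choose_div_nat
  have h2 : (N / 2).choose (k / 2) % 2 =
      ((N / 2 % 2).choose (k / 2 % 2) * (N / 2 / 2).choose (k / 2 / 2)) % 2 :=
    Choose.choose_modEq_choose_mod_mul_choose_div_nat
  rw [h1, Nat.mul_mod, h2, ← Nat.mul_mod]
  norm_num [Nat.div_div_eq_div_mul]

/-- If `n·m` or `⌊n/2⌋·⌊m/2⌋` is odd then `C(m+n, n) ≡ 0 mod 2`; otherwise
`C(m+n, n) ≡ C(⌊n/4⌋+⌊m/4⌋, ⌊n/4⌋) mod 2`. -/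
theorem stmt_14 (m n : ℕ) :
    (Odd (n * m) ∨ Odd ((n / 2) * (m / 2)) → (m + n).choose n % 2 = 0) ∧
    (¬(Odd (n * m) ∨ Odd ((n / 2) * (m / 2))) →
      (m + n).choose n % 2 = (n / 4 + m / 4).choose (n / 4) % 2) := by
  constructor
  · rintro (h | h)
    · obtain ⟨hn, hm⟩ := Nat.odd_mul.mp h
      rw [Nat.odd_iff] at hn hm
      have e : (m + n) % 2 = 0 := by omega
      rw [key2, e, hn]
      simp
    · obtain ⟨hn, hm⟩ := Nat.odd_mul.mp h
      rw [Nat.odd_iff] at hn hm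
      by_cases hb : n % 2 = 1 ∧ m % 2 = 1
      · have e : (m + n) % 2 = 0 := by omega
        rw [key2, e, hb.1]
        simp
      · have e : (m + n) / 2 % 2 = 0 := by omega
        rw [key2, e, hn]
        simp
  · intro h
    push_neg at h
    obtain ⟨h1, h2⟩ := h
    simp only [Nat.odd_mul, not_and_or, Nat.not_odd_iff] at h1 h2
    rw [key2]
    have hb1 : (m + n) % 2 = n % 2 ∨ n % 2 = 0 := by omega
    have hb2 : (m + n) / 2 % 2 = n / 2 % 2 ∨ n / 2 % 2 = 0 := by omega
    have h4 : (m + n) / 4 = n / 4 + m / 4 := by omega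
    have c1 : ((m + n) % 2).choose (n % 2) = 1 := by
      rcases hb1 with he | he <;> simp [he, Nat.choose_self]
    have c2 : ((m + n) / 2 % 2).choose (n / 2 % 2) = 1 := by
      rcases hb2 with he | he <;> simp [he, Nat.choose_self]
    rw [c1, c2, h4, one_mul, one_mul]
end
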